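/- Let L be a field and V a finite-dimensional L-vector space with automorphisms φ, ψ ∈ GL(V) satisfying ψ ∘ φ ∘ ψ⁻¹ = φ^q for some integer q ≥ 2. Then there exist positive integers N and N' such that (φ^N − id_V)^{N'} = 0 in End_L(V). -/

import Mathlib

/-!
Conjugate elements have the same minimal polynomial, so `ψ φ ψ⁻¹ = φ ^ q` makes the roots of the
minimal polynomial `m` of `φ` in an algebraic closure stable under `x ↦ x ^ q`. These roots are
nonzero since `φ` is invertible, and a finite set of nonzero elements stable under `x ↦ x ^ q`
with `q ≥ 2` consists of roots of unity. If `ζ ^ N = 1` for all of them, then `m` divides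
`(X ^ N - 1) ^ deg m`.
-/

open Polynomial

theorem Finset.isOfFinOrder_of_forall_pow_mem {M : Type*} [MonoidWithZero M] [IsCancelMulZero M]
    {s : Finset M} (h0 : (0 : M) ∉ s) {q : ℕ} (hq : 1 < q) (hpow : ∀ x ∈ s, x ^ q ∈ s)
    {x : M} (hx : x ∈ s) : IsOfFinOrder x := by
  have horbit : ∀ k : ℕ, x ^ q ^ k ∈ s := by
    intro k
    induction k with
    | zero => simpa using hx
    | succ k ih => simpa only [pow_succ, pow_mul] using hpow _ ih
  obtain ⟨i, j, hij, heq⟩ :=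
    s.finite_toSet.exists_lt_map_eq_of_forall_mem (f := fun k : ℕ ↦ x ^ q ^ k) horbit
  have hlt : q ^ i < q ^ j := Nat.pow_lt_pow_right hq hij
  have hx0 : x ^ q ^ i ≠ 0 := pow_ne_zero _ (ne_of_mem_of_not_mem hx h0)
  refine isOfFinOrder_iff_pow_eq_one.2 ⟨q ^ j - q ^ i, Nat.sub_pos_of_lt hlt, ?_⟩
  refine mul_left_cancel₀ hx0 ?_
  rw [← pow_add, Nat.add_sub_cancel' hlt.le, mul_one]
  exact heq.symm

theorem Finset.exists_pos_forall_pow_eq_one {M : Type*} [Monoid M] {s : Finset M}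
    (h : ∀ x ∈ s, IsOfFinOrder x) : ∃ N, 0 < N ∧ ∀ x ∈ s, x ^ N = 1 :=
  ⟨s.prod orderOf, Finset.prod_pos fun x hx ↦ (h x hx).orderOf_pos,
    fun _ hx ↦ orderOf_dvd_iff_pow_eq_one.1 (Finset.dvd_prod_of_mem _ hx)⟩

theorem minpoly.coeff_zero_ne_zero_of_isUnit {L A : Type*} [Field L] [Ring A] [Algebra L A]
    {a : A} (hint : IsIntegral L a) (ha : IsUnit a) : (minpoly L a).coeff 0 ≠ 0 := by
  intro h0
  obtain ⟨g, hg⟩ := X_dvd_iff.2 h0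
  have hmonic : g.Monic := monic_X.of_mul_monic_left (hg ▸ minpoly.monic hint)
  have hg0 : Polynomial.aeval a g = 0 := by
    have := minpoly.aeval L a
    rwa [hg, map_mul, aeval_X, ha.mul_right_eq_zero] at this
  have hdeg := minpoly.min L a hmonic hg0
  rw [hg, degree_mul, degree_X, degree_eq_natDegree hmonic.ne_zero] at hdeg
  norm_cast at hdeg
  omega

theorem minpoly.dvd_comp_X_pow_of_algEquiv {L A : Type*} [Field L] [Ring A] [Algebra L A]
    (e : A ≃ₐ[L] A) {a : A} {q : ℕ} (h : e a = a ^ q) :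
    minpoly L a ∣ (minpoly L a).comp (X ^ q) := by
  refine minpoly.dvd L a ?_
  rw [aeval_comp, map_pow, aeval_X, ← h, ← minpoly.algEquiv_eq e, minpoly.aeval]

theorem Polynomial.pow_mem_aroots_of_dvd_comp_X_pow {L K : Type*} [Field L] [Field K]
    [Algebra L K] {p : L[X]} {q : ℕ} (hp : p ∣ p.comp (X ^ q)) {r : K} (hr : r ∈ p.aroots K) :
    r ^ q ∈ p.aroots K := by
  rw [mem_aroots] at hr ⊢
  obtain ⟨c, hc⟩ := hp
  refine ⟨hr.1, ?_⟩
  have := congrArg (aeval r) hc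
  rwa [aeval_comp, map_pow, aeval_X, map_mul, hr.2, zero_mul] at this

theorem Polynomial.Monic.dvd_pow_natDegree_of_forall_aroots {L K : Type*} [Field L] [Field K]
    [Algebra L K] [IsAlgClosed K] {p Q : L[X]} (hp : p.Monic)
    (hQ : ∀ r ∈ p.aroots K, aeval r Q = 0) : p ∣ Q ^ p.natDegree := by
  rw [← map_dvd_map' (algebraMap L K), Polynomial.map_pow,
    (IsAlgClosed.splits (p.map (algebraMap L K))).eq_prod_roots_of_monic (hp.map _),
    ← IsAlgClosed.card_roots_map_eq_natDegree_of_injective p (algebraMap L K).injective,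
    ← Multiset.prod_replicate, ← Multiset.map_const']
  refine Multiset.prod_dvd_prod_of_dvd _ _ fun r hr ↦ dvd_iff_isRoot.2 ?_
  simpa [IsRoot, eval_map_algebraMap] using hQ r hr

/-- If `V` is a finite-dimensional vector space over a field `L` and `φ, ψ` are
automorphisms of `V` with `ψ ∘ φ ∘ ψ⁻¹ = φ^q` for some integer `q ≥ 2`, then
`(φ^N − id)^N' = 0` in `End_L(V)` for some positive integers `N, N'`. -/
theorem pow_sub_one_nilpotent_of_conj_pow
    (L : Type*) [Field L]
    (V : Type*) [AddCommGroup V] [Module L V] [FiniteDimensional L V]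
    (φ ψ : V ≃ₗ[L] V) (q : ℕ) (hq : 2 ≤ q)
    (hconj : ψ * φ * ψ⁻¹ = φ ^ q) :
    ∃ N N' : ℕ, 0 < N ∧ 0 < N' ∧
      ((φ : Module.End L V) ^ N - 1) ^ N' = 0 := by
  classical
  set f : Module.End L V := φ.toLinearMap
  have hf : ψ.conjAlgEquiv L f = f ^ q := by
    have := congrArg LinearEquiv.automorphismGroup.toLinearMapMonoidHom hconj
    rwa [map_mul, map_mul, map_pow] at this
  have hint : IsIntegral L f := Algebra.IsIntegral.isIntegral f
  set m := minpoly L f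
  set roots := (m.aroots (AlgebraicClosure L)).toFinset
  have h0 : 0 ∉ roots := by
    rw [Multiset.mem_toFinset, mem_aroots, ← coeff_zero_eq_aeval_zero',
      map_eq_zero_iff _ (algebraMap L _).injective]
    exact fun h ↦ minpoly.coeff_zero_ne_zero_of_isUnit hint
      ((Module.End.isUnit_iff f).2 φ.bijective) h.2
  have hpow : ∀ r ∈ roots, r ^ q ∈ roots := by
    simp only [roots, Multiset.mem_toFinset]
    exact fun r ↦ pow_mem_aroots_of_dvd_comp_X_pow (minpoly.dvd_comp_X_pow_of_algEquiv _ hf)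
  obtain ⟨N, hN, hroots⟩ :=
    roots.exists_pos_forall_pow_eq_one fun r ↦ roots.isOfFinOrder_of_forall_pow_mem h0 hq hpow
  have hdvd : m ∣ (X ^ N - 1) ^ m.natDegree :=
    (minpoly.monic hint).dvd_pow_natDegree_of_forall_aroots (K := AlgebraicClosure L)
      fun r hr ↦ by
        rw [map_sub, map_pow, aeval_X, map_one, hroots r (Multiset.mem_toFinset.2 hr), sub_self]
  have hzero : (f ^ N - 1) ^ m.natDegree = 0 := by
    simpa using minpoly.dvd_iff.1 hdvd
  -- `m.natDegree = 0` when `V` is trivial, hence the extra factor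
  exact ⟨N, m.natDegree + 1, hN, m.natDegree.succ_pos, by rw [pow_succ, hzero, zero_mul]⟩
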